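/- arXiv:2004.01490 — 2 statements merged into one kernel-verified Lean document; each statement's English description precedes it below -/
import Mathlib

section
/- For real α, β, γ₁, γ₂ with β ≠ 0 and integers 0 ≤ k ≤ n: S(n,k;α,β,γ₁+γ₂) = Σ_{s=k}^{n} C(n,s) · (γ₂|α)_{n-s} · S(s,k;α,β,γ₁), where S denotes the Hsu–Shiue generalized Stirling numbers and (t|α)_m = Π_{j=0}^{m-1}(t-jα). -/
open Finset

/-- Generalized factorial polynomial `(t|α)_n = ∏_{j=0}^{n-1} (t - jα)`. -/
noncomputable def gfact (t α : ℝ) (n : ℕ) : ℝ := ∏ j ∈ Finset.range n, (t - j * α)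

/-- Hsu–Shiue generalized Stirling numbers (explicit formula, β ≠ 0). -/
noncomputable def HS (n k : ℕ) (α β γ : ℝ) : ℝ :=
  (1 / (β ^ k * (Nat.factorial k : ℝ))) *
    ∑ s ∈ Finset.range (k + 1), (-1 : ℝ) ^ (k - s) * (Nat.choose k s : ℝ) * gfact (β * s + γ) α n

/-- Second-type higher order generalized geometric polynomials. -/
noncomputable def A (lam : ℕ) (x : ℝ) (n : ℕ) (α β γ : ℝ) : ℝ :=
  ∑ k ∈ Finset.range (n + 1),
    (Nat.choose (k + lam - 1) k : ℝ) * (-1 : ℝ) ^ (n + k) * β ^ k * (Nat.factorial k : ℝ) *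
      HS n k α (-β) (-γ) * x ^ k

/-!
Vandermonde's convolution for `(·|α)_n` splits `(βs + γ₁ + γ₂|α)_n` into
`∑ₘ C(n,m) (βs + γ₁|α)_m (γ₂|α)_{n-m}`. The alternating sum defining `S(n,k)` is the `k`-th forward
difference in `s`, so it passes through the convolution term by term; the terms with `m < k` vanish
because `s ↦ (βs + γ₁|α)_m` is a polynomial of degree at most `m`.
-/

open Polynomial fwdDiff

lemma gfact_succ (t α : ℝ) (n : ℕ) : gfact t α (n + 1) = gfact t α n * (t - n * α) :=
  prod_range_succ _ _

lemma gfact_eq_eval (t α : ℝ) (n : ℕ) :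
    gfact t α n = (∏ j ∈ range n, (X - C (j * α))).eval t := by
  simp [gfact, eval_prod]

lemma gfact_add_antidiagonal (α x y : ℝ) (n : ℕ) :
    gfact (x + y) α n =
      ∑ ij ∈ antidiagonal n, (n.choose ij.1 : ℝ) * (gfact x α ij.1 * gfact y α ij.2) := by
  induction n with
  | zero => simp [gfact]
  | succ n ih =>
    rw [sum_antidiagonal_choose_succ_mul (fun i j ↦ gfact x α i * gfact y α j), gfact_succ, ih,
      sum_mul, ← sum_add_distrib]
    refine sum_congr rfl fun ⟨i, j⟩ hij ↦ ?_
    -- on the antidiagonal, `x + y - nα = (x - iα) + (y - jα)`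
    have hn : (n : ℝ) = i + j := by exact_mod_cast (mem_antidiagonal.mp hij).symm
    rw [n.choose_symm_of_eq_add (mem_antidiagonal.mp hij).symm, gfact_succ, gfact_succ, hn]
    ring

lemma gfact_add (α x y : ℝ) (n : ℕ) :
    gfact (x + y) α n =
      ∑ m ∈ range (n + 1), (n.choose m : ℝ) * gfact x α m * gfact y α (n - m) := by
  rw [gfact_add_antidiagonal, Nat.sum_antidiagonal_eq_sum_range_succ_mk]
  simp only [mul_assoc]

lemma sum_alternating_choose_mul_eval_eq_zero {R : Type*} [CommRing R] {p : R[X]} {k : ℕ}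
    (hp : p.natDegree < k) :
    ∑ s ∈ range (k + 1), (-1 : R) ^ (k - s) * (k.choose s : R) * p.eval (s : R) = 0 := by
  have h := congr_fun (fwdDiff_iter_eq_zero_of_degree_lt hp) 0
  rw [fwdDiff_iter_eq_sum_shift] at h
  simpa [zsmul_eq_mul] using h

lemma HS_eq_zero_of_lt {m k : ℕ} (α β γ : ℝ) (h : m < k) : HS m k α β γ = 0 := by
  set p : ℝ[X] := (∏ j ∈ range m, (X - C (j * α))).comp (C β * X + C γ)
  have hdeg : p.natDegree < k := by
    have hprod : (∏ j ∈ range m, (X - C (j * α))).natDegree ≤ m := by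
      refine (natDegree_prod_le _ _).trans ?_
      simpa using sum_le_sum fun j (_ : j ∈ range m) ↦ (natDegree_X_sub_C (j * α)).le
    calc p.natDegree ≤ m * 1 := natDegree_comp_le.trans (Nat.mul_le_mul hprod natDegree_linear_le)
      _ < k := by rwa [mul_one]
  have heval (s : ℕ) : gfact (β * s + γ) α m = p.eval (s : ℝ) := by
    simp [p, gfact_eq_eval, eval_comp]
  simp only [HS, heval]
  rw [sum_alternating_choose_mul_eval_eq_zero hdeg, mul_zero]

lemma HS_add_eq_sum_range (α β γ₁ γ₂ : ℝ) (n k : ℕ) :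
    HS n k α β (γ₁ + γ₂) =
      ∑ m ∈ range (n + 1), (n.choose m : ℝ) * gfact γ₂ α (n - m) * HS m k α β γ₁ := by
  have hsplit (s : ℕ) : gfact (β * s + (γ₁ + γ₂)) α n =
      ∑ m ∈ range (n + 1), (n.choose m : ℝ) * gfact (β * s + γ₁) α m * gfact γ₂ α (n - m) := by
    rw [← add_assoc, gfact_add]
  simp only [HS, hsplit, mul_sum]
  rw [sum_comm]
  refine sum_congr rfl fun m _ ↦ sum_congr rfl fun s _ ↦ ?_
  ring

theorem stmt1_general (α β γ₁ γ₂ : ℝ) (n k : ℕ) :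
    HS n k α β (γ₁ + γ₂) =
      ∑ s ∈ Finset.Icc k n, (Nat.choose n s : ℝ) * gfact γ₂ α (n - s) * HS s k α β γ₁ := by
  rw [HS_add_eq_sum_range]
  refine (sum_subset (fun s hs ↦ ?_) fun s hsn hsk ↦ ?_).symm
  · simp only [mem_Icc, mem_range] at hs ⊢
    omega
  · simp only [mem_Icc, mem_range] at hsn hsk
    rw [HS_eq_zero_of_lt α β γ₁ (by omega), mul_zero]

theorem stmt1 (α β γ₁ γ₂ : ℝ) (hβ : β ≠ 0) (n k : ℕ) (hk : k ≤ n) :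
    HS n k α β (γ₁ + γ₂) =
      ∑ s ∈ Finset.Icc k n, (Nat.choose n s : ℝ) * gfact γ₂ α (n - s) * HS s k α β γ₁ :=
  stmt1_general α β γ₁ γ₂ n k
end

section
/- For all real α, β ≠ 0, γ, x, all λ ∈ ℕ with λ ≥ 1, and all n ≥ 0: A^{λ,x}_n(α,β,γ) = (-1)^n · Σ_{k=0}^{n} C(k+λ-1,k) · (-β)^k · k! · S(n,k;α,β,βλ-γ) · (x+1)^k. -/
open Finset

/-!
Write `f(s) = (-βs-γ | α)_n`, a polynomial of degree `≤ n` in `s`. Both Stirling sums are `k`-th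
forward differences at `0`, of `f` on the left and of `s ↦ f(-λ-s)` on the right, so the theorem
becomes the reflection symmetry
`Σ_k C(λ+k-1,k) x^k Δ^k f(0) = Σ_k C(λ+k-1,k) (-1-x)^k Δ^k [f(-λ-·)](0)`.
Both sides are linear in `f`; by Newton's forward formula it suffices to check it on the binomial
polynomials `t ↦ C(t,m)`, where `Δ^k` lowers `m` by `k` and the upper negation
`C(-λ-t,m) = (-1)^m C(t+λ+m-1,m)` reduces the right side to the binomial theorem.
-/

open Polynomial fwdDiff
open scoped Nat

section BinomialRing

variable {R : Type*} [CommRing R] [BinomialRing R]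

theorem Ring.choose_add_sub_one_mul_choose (a : R) {k m : ℕ} (hkm : k ≤ m) :
    Ring.choose (a + k - 1) k * Ring.choose (a + m - 1) (m - k) =
      m.choose k * Ring.choose (a + m - 1) m := by
  have h := Ring.choose_smul_choose (a + m - 1) (Nat.sub_le m k)
  rw [Nat.choose_symm hkm, Nat.sub_sub_self hkm, Nat.cast_sub hkm, nsmul_eq_mul,
    show a + m - 1 - (m - k : R) = a + k - 1 by ring] at h
  rw [h, mul_comm]

theorem fwdDiff_choose_add_succ (b : R) (j : ℕ) :
    Δ_[1] (fun t => Ring.choose (t + b) (j + 1)) = fun t => Ring.choose (t + b) j := by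
  ext t
  rw [fwdDiff, add_right_comm, Ring.choose_succ_succ, add_sub_cancel_right]

theorem fwdDiff_iter_choose_add (b : R) (k m : ℕ) :
    Δ_[1] ^[k] (fun t => Ring.choose (t + b) m) =
      fun t => if k ≤ m then Ring.choose (t + b) (m - k) else 0 := by
  induction k with
  | zero => simp
  | succ k ih =>
    rw [Function.iterate_succ_apply', ih]
    rcases lt_trichotomy k m with hkm | rfl | hkm
    · simp only [if_pos hkm.le, if_pos (show k + 1 ≤ m from hkm)]
      rw [show m - k = m - (k + 1) + 1 by omega, fwdDiff_choose_add_succ]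
    · ext t
      simp [fwdDiff]
    · ext t
      simp [fwdDiff, hkm.not_ge, hkm.asymm]

end BinomialRing

section FwdDiffGeomSum

variable {K : Type*} [Field K] [CharZero K]

theorem Ring.choose_eq_eval (a : K) (m : ℕ) :
    Ring.choose a m = (C (m ! : K)⁻¹ * descPochhammer K m).eval a := by
  rw [Ring.choose_eq_smul, ← aeval_eq_smeval, aeval_def, ← eval_map, descPochhammer_map,
    eval_mul, eval_C, smul_eq_mul]

/-- Newton's forward-difference formula, valid at every point because both sides are polynomials
agreeing on `ℕ`. -/
theorem Polynomial.eval_eq_sum_fwdDiff_iter_mul_choose (P : K[X]) {n : ℕ}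
    (hP : P.natDegree ≤ n) (t : K) :
    P.eval t = ∑ m ∈ range (n + 1), Δ_[1] ^[m] P.eval 0 * Ring.choose t m := by
  set Q : K[X] :=
    ∑ m ∈ range (n + 1), C (Δ_[1] ^[m] P.eval 0) * (C (m ! : K)⁻¹ * descPochhammer K m)
  have hQ : ∀ t, Q.eval t = ∑ m ∈ range (n + 1), Δ_[1] ^[m] P.eval 0 * Ring.choose t m := by
    simp [Q, eval_finsetSum, Ring.choose_eq_eval]
  suffices hPQ : P = Q from (congrArg (eval t) hPQ).trans (hQ t)
  refine eq_of_infinite_eval_eq _ _ <|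
    (Set.infinite_range_of_injective Nat.cast_injective).mono ?_
  rintro _ ⟨j, rfl⟩
  rw [Set.mem_ofPred_eq, hQ]
  have hGregoryNewton := shift_eq_sum_fwdDiff_iter 1 P.eval j 0
  rw [zero_add, nsmul_one] at hGregoryNewton
  rw [hGregoryNewton, sum_subset (range_subset_range.mpr (by omega : j + 1 ≤ n + j + 1)),
    sum_subset (range_subset_range.mpr (by omega : n + 1 ≤ n + j + 1))]
  · exact sum_congr rfl fun m _ => by rw [Ring.choose_natCast, nsmul_eq_mul, mul_comm]
  · intro m _ hm
    rw [fwdDiff_iter_eq_zero_of_degree_lt (by simp at hm; omega), Pi.zero_apply, zero_mul]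
  · intro m _ hm
    rw [Nat.choose_eq_zero_of_lt (by simp at hm; omega), zero_smul]

/-- The truncation at order `n` of `(1 - zΔ)^{-a} f` evaluated at `0`. -/
noncomputable def fwdDiffGeomSum (a : K) (n : ℕ) (f : K → K) (z : K) : K :=
  ∑ k ∈ range (n + 1), Ring.choose (a + k - 1) k * z ^ k * Δ_[1] ^[k] f 0

theorem fwdDiffGeomSum_sum_smul (a : K) (n : ℕ) (s : Finset ℕ) (c : ℕ → K) (g : ℕ → K → K)
    (z : K) :
    fwdDiffGeomSum a n (∑ m ∈ s, c m • g m) z = ∑ m ∈ s, c m * fwdDiffGeomSum a n (g m) z := by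
  simp only [fwdDiffGeomSum, fwdDiff_iter_finsetSum, fwdDiff_iter_const_smul, Finset.sum_apply,
    Pi.smul_apply, smul_eq_mul, mul_sum]
  rw [sum_comm]
  exact sum_congr rfl fun _ _ => sum_congr rfl fun _ _ => by ring

theorem fwdDiffGeomSum_choose (a z : K) {m n : ℕ} (hmn : m ≤ n) :
    fwdDiffGeomSum a n (fun t => Ring.choose t m) z = Ring.choose (a + m - 1) m * z ^ m := by
  have hΔ : ∀ k, Δ_[1] ^[k] (fun t : K => Ring.choose t m) 0 = if k = m then 1 else 0 := by
    intro k
    have h := congrFun (fwdDiff_iter_choose_add (0 : K) k m) 0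
    simp only [add_zero] at h
    rw [h, Ring.choose_zero_ite]
    rcases eq_or_ne k m with rfl | hkm
    · simp
    · simp [hkm]
      omega
  simp [fwdDiffGeomSum, hΔ, hmn]

theorem fwdDiffGeomSum_choose_neg_sub (a z : K) {m n : ℕ} (hmn : m ≤ n) :
    fwdDiffGeomSum a n (fun t => Ring.choose (-a - t) m) (-1 - z) =
      Ring.choose (a + m - 1) m * z ^ m := by
  have hneg : (fun t => Ring.choose (-a - t) m) =
      (-1 : K) ^ m • fun t => Ring.choose (t + (a + m - 1)) m := by
    ext t
    rw [show -a - t = -(t + a) by ring, Ring.choose_neg]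
    simp [Units.smul_def, add_sub_assoc, add_assoc]
  have hΔ : ∀ k, Δ_[1] ^[k] (fun t => Ring.choose (-a - t) m) 0 =
      (-1) ^ m * if k ≤ m then Ring.choose (a + m - 1) (m - k) else 0 := by
    intro k
    rw [hneg, fwdDiff_iter_const_smul, fwdDiff_iter_choose_add]
    simp
  calc fwdDiffGeomSum a n (fun t => Ring.choose (-a - t) m) (-1 - z)
      = ∑ k ∈ range (m + 1), (-1) ^ m * Ring.choose (a + m - 1) m *
          ((-1 - z) ^ k * 1 ^ (m - k) * m.choose k) := by
        rw [fwdDiffGeomSum, ← sum_subset (range_subset_range.mpr (by omega : m + 1 ≤ n + 1))]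
        · refine sum_congr rfl fun k hk => ?_
          have hkm : k ≤ m := by simp at hk; omega
          rw [hΔ, if_pos hkm]
          linear_combination (-1) ^ m * (-1 - z) ^ k * Ring.choose_add_sub_one_mul_choose a hkm
        · intro k _ hk
          rw [hΔ, if_neg (by simp at hk; omega)]
          ring
    _ = (-1) ^ m * Ring.choose (a + m - 1) m * (-1 - z + 1) ^ m := by rw [← mul_sum, add_pow]
    _ = Ring.choose (a + m - 1) m * z ^ m := by
        rw [show -1 - z + 1 = -1 * z by ring, mul_pow, ← mul_assoc, mul_comm _ ((-1) ^ m),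
          ← mul_assoc, ← mul_pow]
        simp

theorem Polynomial.fwdDiffGeomSum_eval_neg_sub (P : K[X]) {n : ℕ} (hP : P.natDegree ≤ n)
    (a z : K) :
    fwdDiffGeomSum a n P.eval z = fwdDiffGeomSum a n (fun t => P.eval (-a - t)) (-1 - z) := by
  obtain ⟨c, hc⟩ : ∃ c : ℕ → K, ∀ t, P.eval t = ∑ m ∈ range (n + 1), c m * Ring.choose t m :=
    ⟨_, P.eval_eq_sum_fwdDiff_iter_mul_choose hP⟩
  have hP' : P.eval = ∑ m ∈ range (n + 1), c m • fun t => Ring.choose t m := by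
    ext t
    simp [hc]
  have hPneg : (fun t => P.eval (-a - t)) =
      ∑ m ∈ range (n + 1), c m • fun t => Ring.choose (-a - t) m := by
    ext t
    simp [hc]
  rw [hP', hPneg, fwdDiffGeomSum_sum_smul, fwdDiffGeomSum_sum_smul]
  refine sum_congr rfl fun m hm => ?_
  have hmn : m ≤ n := by simp at hm; omega
  rw [fwdDiffGeomSum_choose a z hmn, fwdDiffGeomSum_choose_neg_sub a z hmn]

end FwdDiffGeomSum

theorem exists_natDegree_le_eval_eq_gfact (α β γ : ℝ) (n : ℕ) :
    ∃ P : ℝ[X], P.natDegree ≤ n ∧ P.eval = fun t => gfact (β * t + γ) α n := by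
  refine ⟨∏ j ∈ range n, (C β * X + C (γ - j * α)), ?_, ?_⟩
  · exact (natDegree_prod_le _ _).trans <|
      (sum_le_sum fun _ _ => natDegree_linear_le).trans (by simp)
  · ext t
    simp only [gfact, eval_prod, eval_add, eval_mul, eval_C, eval_X]
    exact prod_congr rfl fun _ _ => by ring

theorem HS_eq_fwdDiff_iter_div (n k : ℕ) (α β γ : ℝ) :
    HS n k α β γ = Δ_[1] ^[k] (fun s => gfact (β * s + γ) α n) 0 / (β ^ k * k !) := by
  rw [HS, fwdDiff_iter_eq_sum_shift, one_div, inv_mul_eq_div]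
  congr 1
  exact sum_congr rfl fun s _ => by simp

theorem stmt8 (α β γ x : ℝ) (hβ : β ≠ 0) (lam : ℕ) (hlam : 1 ≤ lam) (n : ℕ) :
    A lam x n α β γ =
      (-1 : ℝ) ^ n *
        ∑ k ∈ Finset.range (n + 1),
          (Nat.choose (k + lam - 1) k : ℝ) * (-β) ^ k * (Nat.factorial k : ℝ) *
            HS n k α β (β * lam - γ) * (x + 1) ^ k := by
  obtain ⟨P, hPdeg, hP⟩ := exists_natDegree_le_eval_eq_gfact α (-β) (-γ) n
  have hPneg : (fun s => gfact (β * s + (β * lam - γ)) α n) = fun t => P.eval (-(lam : ℝ) - t) := by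
    ext t
    rw [congrFun hP]
    ring_nf
  have hweight : ∀ k, ((k + lam - 1).choose k : ℝ) = Ring.choose ((lam : ℝ) + k - 1) k := by
    intro k
    rw [← Ring.choose_natCast, Nat.cast_sub (by omega)]
    push_cast
    ring_nf
  calc A lam x n α β γ = (-1) ^ n * fwdDiffGeomSum (lam : ℝ) n P.eval x := by
        rw [A, fwdDiffGeomSum, mul_sum]
        refine sum_congr rfl fun k _ => ?_
        rw [HS_eq_fwdDiff_iter_div, hP, hweight, neg_pow β, pow_add]
        field_simp
    _ = (-1) ^ n * fwdDiffGeomSum (lam : ℝ) n (fun t => P.eval (-(lam : ℝ) - t)) (-1 - x) := by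
        rw [P.fwdDiffGeomSum_eval_neg_sub hPdeg]
    _ = _ := by
        rw [fwdDiffGeomSum]
        congr 1
        refine sum_congr rfl fun k _ => ?_
        rw [HS_eq_fwdDiff_iter_div, hPneg, hweight, neg_pow β, show -1 - x = -1 * (x + 1) by ring,
          mul_pow]
        field_simp
end
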